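/- Let r ≥ 3 and α ∈ (0,1). Let H' be a connected (r−1)-uniform hypergraph and let H be its r-uniform extension, obtained by adding to each edge of H' one new vertex, with the new vertices pairwise distinct. Then ρ(H) = (r−1)!·α^{−1/r} if and only if ρ(H') = (r−2)!·α^{−1/(r−1)}, and ρ(H) < (r−1)!·α^{−1/r} if and only if ρ(H') < (r−2)!·α^{−1/(r−1)}. -/

import Mathlib

open Finset

/-- A hypergraph on vertex type `V`, given by its finite set of edges. -/
structure FinHypergraph (V : Type) [DecidableEq V] where
  edges : Finset (Finset V)

namespace FinHypergraph

variable {V : Type} [DecidableEq V]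

/-- The vertex set of `H`: all vertices lying in some edge. -/
def vertexSet (H : FinHypergraph V) : Finset V := H.edges.biUnion id

/-- `H` is `r`-uniform: every edge has exactly `r` vertices. -/
def IsUniform (H : FinHypergraph V) (r : ℕ) : Prop := ∀ e ∈ H.edges, e.card = r

/-- The degree of a vertex: the number of edges containing it. -/
def degree (H : FinHypergraph V) (v : V) : ℕ := (H.edges.filter fun e => v ∈ e).card

/-- The spectral radius of an `r`-uniform hypergraph `H`:
`ρ(H) = r! · max{ (∑_{e ∈ E} ∏_{v ∈ e} x_v) / (∑_v x_v ^ r) : x ≥ 0, x ≠ 0 }`. -/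
noncomputable def spectralRadius (H : FinHypergraph V) (r : ℕ) : ℝ :=
  (Nat.factorial r : ℝ) *
    sSup {t : ℝ | ∃ x : V → ℝ, (∀ v, 0 ≤ x v) ∧ (∃ v ∈ H.vertexSet, x v ≠ 0) ∧
      t = (∑ e ∈ H.edges, ∏ v ∈ e, x v) / (∑ v ∈ H.vertexSet, x v ^ r)}

/-- `v, e` form a walk `v 0, e 0, v 1, e 1, …, e (l-1), v l` in `H`. -/
def IsWalkSeq (H : FinHypergraph V) {l : ℕ} (v : Fin (l + 1) → V) (e : Fin l → Finset V) : Prop :=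
  ∀ i : Fin l, e i ∈ H.edges ∧ v i.castSucc ∈ e i ∧ v i.succ ∈ e i

/-- `H` is connected: every two vertices are joined by a walk. -/
def Connected (H : FinHypergraph V) : Prop :=
  ∀ u ∈ H.vertexSet, ∀ w ∈ H.vertexSet,
    ∃ (l : ℕ) (v : Fin (l + 1) → V) (e : Fin l → Finset V),
      H.IsWalkSeq v e ∧ v 0 = u ∧ v (Fin.last l) = w

/-- The cyclic successor on `Fin l`. -/
def cyc {l : ℕ} (i : Fin l) : Fin l := ⟨((i : ℕ) + 1) % l, Nat.mod_lt _ i.pos⟩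

/-- `v, e` form a cycle `v 0, e 0, v 1, e 1, …, e (l-1), v 0` of length `l` in `H`,
with all vertices and all edges distinct. -/
def IsCycleSeq (H : FinHypergraph V) {l : ℕ} (v : Fin l → V) (e : Fin l → Finset V) : Prop :=
  Function.Injective v ∧ Function.Injective e ∧
    ∀ i : Fin l, e i ∈ H.edges ∧ v i ∈ e i ∧ v (cyc i) ∈ e i

/-- `H` contains a cycle. -/
def HasCycle (H : FinHypergraph V) : Prop :=
  ∃ l : ℕ, 2 ≤ l ∧ ∃ (v : Fin l → V) (e : Fin l → Finset V), H.IsCycleSeq v e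

/-- A hypertree: connected and acyclic. -/
def IsHypertree (H : FinHypergraph V) : Prop := H.Connected ∧ ¬H.HasCycle

/-- `H` is irreducible: some edge has all of its vertices of degree at least `2`. -/
def Irreducible (H : FinHypergraph V) : Prop := ∃ e ∈ H.edges, ∀ v ∈ e, 2 ≤ H.degree v

/-- `H` is the extension of `H'`: each edge of `H'` gains one new vertex, the new
vertices being pairwise distinct and not vertices of `H'`. -/
def IsExtensionOf (H H' : FinHypergraph V) : Prop :=
  ∃ φ : Finset V → V,
    Set.InjOn φ (H'.edges : Set (Finset V)) ∧
    (∀ e ∈ H'.edges, φ e ∉ H'.vertexSet) ∧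
    H.edges = H'.edges.image fun e => insert (φ e) e

end FinHypergraph

open FinHypergraph

section RealHelpers

lemma rpow_lt_rpow_iff_aux {u v e : ℝ} (hu : 0 ≤ u) (hv : 0 ≤ v) (he : 0 < e) :
    u ^ e < v ^ e ↔ u < v := by
  constructor
  · intro h
    by_contra hc
    push_neg at hc
    exact absurd (Real.rpow_le_rpow hv hc he.le) (not_le.mpr h)
  · intro h
    exact Real.rpow_lt_rpow hu h he

lemma rpow_eq_rpow_iff_aux {u v e : ℝ} (hu : 0 ≤ u) (hv : 0 ≤ v) (he : 0 < e) :
    u ^ e = v ^ e ↔ u = v := by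
  constructor
  · intro h
    rcases lt_trichotomy u v with h1 | h1 | h1
    · exact absurd (Real.rpow_lt_rpow hu h1 he) (by rw [h]; exact lt_irrefl _)
    · exact h1
    · exact absurd (Real.rpow_lt_rpow hv h1 he) (by rw [h]; exact lt_irrefl _)
  · intro h; rw [h]

/-- The core Young-type inequality. -/
lemma core_ineq {R : ℝ} (hR2 : 2 ≤ R) (C W : ℝ) (hC : 0 ≤ C) (hW : 0 ≤ W) :
    W ^ ((1:ℝ)/R) * C ^ ((R - 1) / R) ≤ ((R - 1) ^ ((R - 1) / R) / R) * (C + W) := by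
  have hR0 : (0 : ℝ) < R := by linarith
  have hR1 : (0 : ℝ) < R - 1 := by linarith
  have key := Real.geom_mean_le_arith_mean2_weighted
    (w₁ := 1 / R) (w₂ := (R - 1) / R) (p₁ := R * W) (p₂ := R / (R - 1) * C)
    (by positivity) (by positivity) (by positivity) (by positivity)
    (by field_simp; ring)
  have h3 : R ^ ((1:ℝ)/R) * R ^ ((R-1)/R) = R := by
    rw [← Real.rpow_add hR0]
    rw [show (1:ℝ) / R + (R-1) / R = 1 by field_simp; ring]
    exact Real.rpow_one R
  have expand : (R * W) ^ ((1:ℝ)/R) * (R / (R - 1) * C) ^ ((R-1)/R)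
      = R ^ ((1:ℝ)/R) * R ^ ((R-1)/R) / (R-1) ^ ((R-1)/R) * (W ^ ((1:ℝ)/R) * C ^ ((R-1)/R)) := by
    rw [Real.mul_rpow hR0.le hW, Real.mul_rpow (by positivity) hC,
      Real.div_rpow hR0.le hR1.le]
    ring
  rw [h3] at expand
  have h4 : 1 / R * (R * W) + (R - 1) / R * (R / (R - 1) * C) = W + C := by
    field_simp
  rw [expand, h4] at key
  have hpow1 : (0:ℝ) < (R-1) ^ ((R-1)/R) := Real.rpow_pos_of_pos hR1 _
  have key2 : W ^ ((1:ℝ)/R) * C ^ ((R-1)/R) ≤ (R-1) ^ ((R-1)/R) / R * (W + C) := by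
    rw [div_mul_eq_mul_div, le_div_iff₀ hR0]
    calc W ^ ((1:ℝ)/R) * C ^ ((R-1)/R) * R
        = (R-1) ^ ((R-1)/R) * (R / (R-1) ^ ((R-1)/R) * (W ^ ((1:ℝ)/R) * C ^ ((R-1)/R))) := by
          field_simp
      _ ≤ (R-1) ^ ((R-1)/R) * (W + C) := mul_le_mul_of_nonneg_left key hpow1.le
  calc W ^ ((1:ℝ)/R) * C ^ ((R-1)/R) ≤ (R-1) ^ ((R-1)/R) / R * (W + C) := key2
    _ = (R-1) ^ ((R-1)/R) / R * (C + W) := by ring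

/-- Hölder for finite sums in the form we need. -/
lemma holder_sum {ι : Type*} (s : Finset ι) (a z : ι → ℝ)
    (ha : ∀ i ∈ s, 0 ≤ a i) (hz : ∀ i ∈ s, 0 ≤ z i) (r : ℕ) (hr : 2 ≤ r) :
    ∑ i ∈ s, z i * a i ≤
      (∑ i ∈ s, a i ^ ((r : ℝ) / ((r : ℝ) - 1))) ^ (((r : ℝ) - 1) / (r : ℝ)) *
        (∑ i ∈ s, z i ^ r) ^ ((1 : ℝ) / (r : ℝ)) := by
  have hR2 : (2 : ℝ) ≤ (r : ℝ) := by exact_mod_cast hr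
  have hR0 : (0 : ℝ) < (r : ℝ) := by linarith
  have hR1 : (0 : ℝ) < (r : ℝ) - 1 := by linarith
  have hpq : Real.HolderConjugate ((r:ℝ) / ((r:ℝ) - 1)) (r:ℝ) := by
    rw [Real.holderConjugate_iff]
    constructor
    · rw [lt_div_iff₀ hR1]; linarith
    · rw [inv_div]; field_simp; ring
  have H := Real.inner_le_Lp_mul_Lq s a z hpq
  have e1 : ∑ i ∈ s, a i * z i = ∑ i ∈ s, z i * a i := by
    apply Finset.sum_congr rfl; intro i _; ring
  have e2 : ∑ i ∈ s, |a i| ^ ((r:ℝ) / ((r:ℝ)-1)) = ∑ i ∈ s, a i ^ ((r:ℝ) / ((r:ℝ)-1)) := by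
    apply Finset.sum_congr rfl; intro i hi; rw [abs_of_nonneg (ha i hi)]
  have e3 : ∑ i ∈ s, |z i| ^ (r:ℝ) = ∑ i ∈ s, z i ^ r := by
    apply Finset.sum_congr rfl; intro i hi
    rw [abs_of_nonneg (hz i hi), Real.rpow_natCast (z i) r]
  have e4 : 1 / ((r:ℝ) / ((r:ℝ)-1)) = ((r:ℝ) - 1) / (r:ℝ) := by
    rw [one_div, inv_div]
  rw [e1, e2, e3, e4] at H
  exact H

end RealHelpers

section HGHelpers

variable {V : Type} [DecidableEq V]

lemma mem_vertexSet_of_mem {G : FinHypergraph V} {e : Finset V} {v : V}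
    (he : e ∈ G.edges) (hv : v ∈ e) : v ∈ G.vertexSet := by
  simp only [vertexSet, Finset.mem_biUnion, id]
  exact ⟨e, he, hv⟩

lemma denom_pos {G : FinHypergraph V} (k : ℕ) (x : V → ℝ) (hx : ∀ v, 0 ≤ x v)
    {v₀ : V} (hv₀ : v₀ ∈ G.vertexSet) (hx₀ : x v₀ ≠ 0) :
    0 < ∑ v ∈ G.vertexSet, x v ^ k := by
  apply Finset.sum_pos' (fun v _ => pow_nonneg (hx v) k)
  exact ⟨v₀, hv₀, pow_pos (lt_of_le_of_ne (hx v₀) (Ne.symm hx₀)) k⟩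

lemma num_le_card_mul (G : FinHypergraph V) (k : ℕ) (hk : 1 ≤ k) (hu : G.IsUniform k)
    (x : V → ℝ) (hx : ∀ v, 0 ≤ x v) :
    (∑ e ∈ G.edges, ∏ v ∈ e, x v) ≤ G.edges.card * ∑ v ∈ G.vertexSet, x v ^ k := by
  rcases G.edges.eq_empty_or_nonempty with h | h
  · simp [h]
  · have hvne : G.vertexSet.Nonempty := by
      obtain ⟨e₀, he₀⟩ := h
      have : e₀.Nonempty := Finset.card_pos.mp (by rw [hu e₀ he₀]; omega)
      obtain ⟨v, hv⟩ := this
      exact ⟨v, mem_vertexSet_of_mem he₀ hv⟩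
    obtain ⟨b, hb, hmax⟩ := G.vertexSet.exists_max_image x hvne
    have hden : x b ^ k ≤ ∑ v ∈ G.vertexSet, x v ^ k :=
      Finset.single_le_sum (f := fun v => x v ^ k) (fun v _ => pow_nonneg (hx v) k) hb
    calc (∑ e ∈ G.edges, ∏ v ∈ e, x v)
        ≤ ∑ _e ∈ G.edges, ∑ v ∈ G.vertexSet, x v ^ k := by
          apply Finset.sum_le_sum
          intro e he
          calc ∏ v ∈ e, x v ≤ ∏ _v ∈ e, x b := by
                apply Finset.prod_le_prod (fun v _ => hx v)
                exact fun v hv => hmax v (mem_vertexSet_of_mem he hv)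
            _ = x b ^ e.card := Finset.prod_const (x b)
            _ = x b ^ k := by rw [hu e he]
            _ ≤ _ := hden
      _ = G.edges.card * ∑ v ∈ G.vertexSet, x v ^ k := by
          rw [Finset.sum_const, nsmul_eq_mul]

end HGHelpers

section MoreHelpers

lemma rpow_npow_aux (x c : ℝ) (hx : 0 ≤ x) (n : ℕ) : (x ^ c) ^ n = x ^ (c * n) := by
  rw [← Real.rpow_natCast (x ^ c) n, ← Real.rpow_mul hx]

lemma value_identity {R P C : ℝ} (hR : 2 ≤ R) (hP : 0 < P) (hC : 0 < C) :
    (R - 1) ^ ((R - 1) / R) / R * (P / C) ^ ((R - 1) / R)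
      = (C / ((R - 1) * P)) ^ ((1 : ℝ) / R) * P / (C * R / (R - 1)) := by
  have hR0 : (0:ℝ) < R := by linarith
  have hR1 : (0:ℝ) < R - 1 := by linarith
  rw [Real.div_rpow hP.le hC.le, Real.div_rpow hC.le (by positivity),
    Real.mul_rpow hR1.le hP.le]
  have hsplitP : P ^ ((1:ℝ)/R) * P ^ ((R-1)/R) = P := by
    rw [← Real.rpow_add hP, show (1:ℝ)/R + (R-1)/R = 1 by field_simp; ring, Real.rpow_one]
  have hsplitC : C ^ ((1:ℝ)/R) * C ^ ((R-1)/R) = C := by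
    rw [← Real.rpow_add hC, show (1:ℝ)/R + (R-1)/R = 1 by field_simp; ring, Real.rpow_one]
  have hsplitQ : (R-1) ^ ((1:ℝ)/R) * (R-1) ^ ((R-1)/R) = R - 1 := by
    rw [← Real.rpow_add hR1, show (1:ℝ)/R + (R-1)/R = 1 by field_simp; ring, Real.rpow_one]
  set pa := P ^ ((1:ℝ)/R) with hpa
  set pb := P ^ ((R-1)/R) with hpb
  set ca := C ^ ((1:ℝ)/R) with hca
  set cb := C ^ ((R-1)/R) with hcb
  set qa := (R-1) ^ ((1:ℝ)/R) with hqa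
  set qb := (R-1) ^ ((R-1)/R) with hqb
  have hpa0 : 0 < pa := Real.rpow_pos_of_pos hP _
  have hca0 : 0 < ca := Real.rpow_pos_of_pos hC _
  have hqa0 : 0 < qa := Real.rpow_pos_of_pos hR1 _
  have hcb0 : 0 < cb := Real.rpow_pos_of_pos hC _
  rw [← hsplitP, ← hsplitC]
  field_simp
  linear_combination pb * hsplitQ

lemma value_upper {R P C Zr N : ℝ} (hR : 2 ≤ R) (hP : 0 < P) (hC : 0 < C) (hZr : 0 ≤ Zr)
    (hN : N ≤ P ^ ((R - 1) / R) * Zr ^ ((1 : ℝ) / R)) :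
    N / (C + Zr) ≤ (R - 1) ^ ((R - 1) / R) / R * (P / C) ^ ((R - 1) / R) := by
  have hR0 : (0:ℝ) < R := by linarith
  have hR1 : (0:ℝ) < R - 1 := by linarith
  have hden : 0 < C + Zr := by linarith
  have hcb0 : 0 < C ^ ((R-1)/R) := Real.rpow_pos_of_pos hC _
  rw [div_le_iff₀ hden, Real.div_rpow hP.le hC.le]
  have hcore := core_ineq hR C Zr hC.le hZr
  calc N ≤ P ^ ((R-1)/R) * Zr ^ ((1:ℝ)/R) := hN
    _ = P ^ ((R-1)/R) / C ^ ((R-1)/R) * (Zr ^ ((1:ℝ)/R) * C ^ ((R-1)/R)) := by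
        field_simp
    _ ≤ P ^ ((R-1)/R) / C ^ ((R-1)/R) * ((R-1) ^ ((R-1)/R) / R * (C + Zr)) := by
        apply mul_le_mul_of_nonneg_left hcore
        positivity
    _ = (R-1) ^ ((R-1)/R) / R * (P ^ ((R-1)/R) / C ^ ((R-1)/R)) * (C + Zr) := by ring

end MoreHelpers

section KeyLemma

variable {V : Type} [DecidableEq V]

lemma key_lemma (r : ℕ) (hr : 3 ≤ r) (H' H : FinHypergraph V)
    (huni : H'.IsUniform (r - 1)) (hext : H.IsExtensionOf H') (hne : H'.edges.Nonempty) :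
    ∃ lam : ℝ, 0 ≤ lam ∧
      H'.spectralRadius (r - 1) = (Nat.factorial (r - 1) : ℝ) * lam ∧
      H.spectralRadius r = (Nat.factorial r : ℝ) *
        ((((r : ℝ) - 1) ^ (((r : ℝ) - 1) / (r : ℝ)) / (r : ℝ)) *
          lam ^ (((r : ℝ) - 1) / (r : ℝ))) := by
  classical
  -- numeric facts
  have hR3 : (3 : ℝ) ≤ (r : ℝ) := by exact_mod_cast hr
  have hR0 : (0 : ℝ) < (r : ℝ) := by linarith
  have hR1 : (0 : ℝ) < (r : ℝ) - 1 := by linarith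
  have hcast : ((r - 1 : ℕ) : ℝ) = (r : ℝ) - 1 := by
    rw [Nat.cast_sub (by omega)]; norm_num
  set e₁ : ℝ := ((r : ℝ) - 1) / (r : ℝ) with he₁def
  have he₁pos : 0 < e₁ := div_pos hR1 hR0
  set K : ℝ := ((r : ℝ) - 1) ^ e₁ / (r : ℝ) with hKdef
  have hKpos : 0 < K := div_pos (Real.rpow_pos_of_pos hR1 _) hR0
  -- structural facts
  obtain ⟨φ, hφi, hφn, hE⟩ := hext
  have hsub : ∀ e ∈ H'.edges, e ⊆ H'.vertexSet := fun e he _ hv => mem_vertexSet_of_mem he hv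
  have hnotmem : ∀ e ∈ H'.edges, φ e ∉ e := fun e he hin => hφn e he (hsub e he hin)
  have hcarde : ∀ e ∈ H'.edges, (insert (φ e) e).card = r := by
    intro e he
    rw [Finset.card_insert_of_notMem (hnotmem e he), huni e he]
    omega
  have huniH : H.IsUniform r := by
    intro E hmem
    rw [hE] at hmem
    obtain ⟨e, he, rfl⟩ := Finset.mem_image.mp hmem
    exact hcarde e he
  have hinj2 : ∀ a ∈ H'.edges, ∀ b ∈ H'.edges, insert (φ a) a = insert (φ b) b → a = b := by
    intro a ha b hb hab
    have h1 : φ a = φ b := by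
      have hmem : φ a ∈ insert (φ b) b := by rw [← hab]; exact Finset.mem_insert_self _ _
      rcases Finset.mem_insert.mp hmem with h | h
      · exact h
      · exact absurd (hsub b hb h) (hφn a ha)
    exact hφi (Finset.mem_coe.mpr ha) (Finset.mem_coe.mpr hb) h1
  have hvs : H.vertexSet = H'.vertexSet ∪ H'.edges.image φ := by
    apply Finset.Subset.antisymm
    · intro v hv
      obtain ⟨E, hEmem, hvE⟩ := Finset.mem_biUnion.mp hv
      rw [hE] at hEmem
      obtain ⟨e, he, rfl⟩ := Finset.mem_image.mp hEmem
      rcases Finset.mem_insert.mp hvE with h | h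
      · exact Finset.mem_union_right _ (Finset.mem_image.mpr ⟨e, he, h.symm⟩)
      · exact Finset.mem_union_left _ (hsub e he h)
    · intro v hv
      rcases Finset.mem_union.mp hv with h | h
      · obtain ⟨e, he, hve⟩ := Finset.mem_biUnion.mp h
        refine Finset.mem_biUnion.mpr ⟨insert (φ e) e, ?_, ?_⟩
        · rw [hE]; exact Finset.mem_image_of_mem _ he
        · exact Finset.mem_insert_of_mem hve
      · obtain ⟨e, he, rfl⟩ := Finset.mem_image.mp h
        refine Finset.mem_biUnion.mpr ⟨insert (φ e) e, ?_, Finset.mem_insert_self _ _⟩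
        rw [hE]; exact Finset.mem_image_of_mem _ he
  have hdisj : Disjoint H'.vertexSet (H'.edges.image φ) := by
    rw [Finset.disjoint_right]
    intro v hv
    obtain ⟨e, he, rfl⟩ := Finset.mem_image.mp hv
    exact hφn e he
  have hsumV : ∀ f : V → ℝ,
      ∑ v ∈ H.vertexSet, f v = ∑ v ∈ H'.vertexSet, f v + ∑ e ∈ H'.edges, f (φ e) := by
    intro f
    rw [hvs, Finset.sum_union hdisj,
      Finset.sum_image (fun a ha b hb h => hφi (Finset.mem_coe.mpr ha) (Finset.mem_coe.mpr hb) h)]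
  have hsumE : ∀ f : Finset V → ℝ,
      ∑ E ∈ H.edges, f E = ∑ e ∈ H'.edges, f (insert (φ e) e) := by
    intro f
    rw [hE, Finset.sum_image hinj2]
  have hprodIns : ∀ (y : V → ℝ), ∀ e ∈ H'.edges,
      ∏ v ∈ insert (φ e) e, y v = y (φ e) * ∏ v ∈ e, y v := by
    intro y e he
    exact Finset.prod_insert (hnotmem e he)
  -- the two ratio sets
  set S' : Set ℝ := {t : ℝ | ∃ x : V → ℝ, (∀ v, 0 ≤ x v) ∧ (∃ v ∈ H'.vertexSet, x v ≠ 0) ∧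
      t = (∑ e ∈ H'.edges, ∏ v ∈ e, x v) / (∑ v ∈ H'.vertexSet, x v ^ (r - 1))} with hS'def
  set S : Set ℝ := {t : ℝ | ∃ x : V → ℝ, (∀ v, 0 ≤ x v) ∧ (∃ v ∈ H.vertexSet, x v ≠ 0) ∧
      t = (∑ e ∈ H.edges, ∏ v ∈ e, x v) / (∑ v ∈ H.vertexSet, x v ^ r)} with hSdef
  -- basics about S' and S
  have hS'nonneg : ∀ t ∈ S', 0 ≤ t := by
    rintro t ⟨x, hx, ⟨v₀, hv₀, hx₀⟩, rfl⟩
    apply div_nonneg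
    · exact Finset.sum_nonneg fun e _ => Finset.prod_nonneg fun v _ => hx v
    · exact Finset.sum_nonneg fun v _ => pow_nonneg (hx v) _
  have hS'bdd : BddAbove S' := by
    refine ⟨(H'.edges.card : ℝ), ?_⟩
    rintro t ⟨x, hx, ⟨v₀, hv₀, hx₀⟩, rfl⟩
    have hd := denom_pos (G := H') (r - 1) x hx hv₀ hx₀
    rw [div_le_iff₀ hd]
    exact num_le_card_mul H' (r - 1) (by omega) huni x hx
  have hSbdd : BddAbove S := by
    refine ⟨(H.edges.card : ℝ), ?_⟩
    rintro t ⟨x, hx, ⟨v₀, hv₀, hx₀⟩, rfl⟩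
    have hd := denom_pos (G := H) r x hx hv₀ hx₀
    rw [div_le_iff₀ hd]
    exact num_le_card_mul H r (by omega) huniH x hx
  have hS'ne : S'.Nonempty := by
    obtain ⟨e₀, he₀⟩ := hne
    have he₀ne : e₀.Nonempty := Finset.card_pos.mp (by rw [huni e₀ he₀]; omega)
    obtain ⟨v₀, hv₀⟩ := he₀ne
    exact ⟨_, fun _ => (1:ℝ), fun _ => zero_le_one,
      ⟨v₀, mem_vertexSet_of_mem he₀ hv₀, one_ne_zero⟩, rfl⟩
  have hSzero : (0 : ℝ) ∈ S := by
    obtain ⟨e₀, he₀⟩ := hne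
    set x : V → ℝ := fun v => if v = φ e₀ then 1 else 0 with hxdef
    have hx0 : ∀ v, 0 ≤ x v := by
      intro v; rw [hxdef]; dsimp only; split_ifs <;> norm_num
    have hnum : (∑ E ∈ H.edges, ∏ v ∈ E, x v) = 0 := by
      rw [hsumE (fun E => ∏ v ∈ E, x v)]
      apply Finset.sum_eq_zero
      intro e he
      have hene : e.Nonempty := Finset.card_pos.mp (by rw [huni e he]; omega)
      obtain ⟨u, hu⟩ := hene
      apply Finset.prod_eq_zero (Finset.mem_insert_of_mem hu)
      have hune : u ≠ φ e₀ := by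
        intro h
        exact hφn e₀ he₀ (h ▸ hsub e he hu)
      rw [hxdef]; dsimp only; rw [if_neg hune]
    refine ⟨x, hx0, ⟨φ e₀, ?_, ?_⟩, ?_⟩
    · rw [hvs]; exact Finset.mem_union_right _ (Finset.mem_image.mpr ⟨e₀, he₀, rfl⟩)
    · rw [hxdef]; dsimp only; rw [if_pos rfl]; exact one_ne_zero
    · rw [hnum, zero_div]
  -- direction A
  have dirA : ∀ t ∈ S', K * t ^ e₁ ∈ S := by
    rintro t ⟨x, hx, ⟨v₀, hv₀, hx₀⟩, rfl⟩
    set P : ℝ := ∑ e ∈ H'.edges, ∏ v ∈ e, x v with hPdef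
    set C : ℝ := ∑ v ∈ H'.vertexSet, x v ^ (r - 1) with hCdef
    have hC : 0 < C := denom_pos (G := H') (r - 1) x hx hv₀ hx₀
    have hP0 : 0 ≤ P := Finset.sum_nonneg fun e _ => Finset.prod_nonneg fun v _ => hx v
    rcases eq_or_lt_of_le hP0 with hP | hP
    · have h0 : P / C = 0 := by rw [← hP, zero_div]
      rw [h0, Real.zero_rpow he₁pos.ne', mul_zero]
      exact hSzero
    · set s₀ : ℝ := (C / (((r : ℝ) - 1) * P)) ^ ((1 : ℝ) / (r : ℝ)) with hs₀def
      have hs₀ : 0 < s₀ := Real.rpow_pos_of_pos (by positivity) _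
      set y : V → ℝ := fun v =>
        if v ∈ H'.vertexSet then x v ^ e₁
        else if h : ∃ e, e ∈ H'.edges ∧ φ e = v then
          s₀ * (∏ u ∈ h.choose, x u) ^ ((1 : ℝ) / (r : ℝ))
        else 0 with hydef
      have hy0 : ∀ v, 0 ≤ y v := by
        intro v
        rw [hydef]; dsimp only
        split_ifs with h1 h2
        · exact Real.rpow_nonneg (hx v) _
        · exact mul_nonneg hs₀.le (Real.rpow_nonneg
            (Finset.prod_nonneg fun u _ => hx u) _)
        · exact le_refl 0
      have hyold : ∀ v ∈ H'.vertexSet, y v = x v ^ e₁ := by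
        intro v hv; rw [hydef]; dsimp only; rw [if_pos hv]
      have hyφ : ∀ e ∈ H'.edges, y (φ e) = s₀ * (∏ u ∈ e, x u) ^ ((1 : ℝ) / (r : ℝ)) := by
        intro e he
        have hnm : φ e ∉ H'.vertexSet := hφn e he
        have hex : ∃ e', e' ∈ H'.edges ∧ φ e' = φ e := ⟨e, he, rfl⟩
        rw [hydef]; dsimp only
        rw [if_neg hnm, dif_pos hex]
        have hc := hex.choose_spec
        have heq : hex.choose = e := hφi (Finset.mem_coe.mpr hc.1) (Finset.mem_coe.mpr he) hc.2
        rw [heq]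
      have hprodold : ∀ e ∈ H'.edges, ∏ v ∈ e, y v = (∏ v ∈ e, x v) ^ e₁ := by
        intro e he
        rw [Finset.prod_congr rfl (fun v hv => hyold v (hsub e he hv)),
          Real.finset_prod_rpow e x (fun v _ => hx v) e₁]
      have hnum : (∑ E ∈ H.edges, ∏ v ∈ E, y v) = s₀ * P := by
        rw [hsumE (fun E => ∏ v ∈ E, y v), hPdef, Finset.mul_sum]
        apply Finset.sum_congr rfl
        intro e he
        rw [hprodIns y e he, hyφ e he, hprodold e he]
        have hb : (0:ℝ) ≤ ∏ v ∈ e, x v := Finset.prod_nonneg fun v _ => hx v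
        rcases eq_or_lt_of_le hb with hb0 | hbpos
        · rw [← hb0, Real.zero_rpow (by positivity : (0:ℝ) < 1/(r:ℝ)).ne',
            Real.zero_rpow he₁pos.ne']
          ring
        · rw [mul_assoc, ← Real.rpow_add hbpos,
            show (1 : ℝ) / (r : ℝ) + e₁ = 1 by rw [he₁def]; field_simp; ring,
            Real.rpow_one]
      have hden : (∑ v ∈ H.vertexSet, y v ^ r) = C * (r : ℝ) / ((r : ℝ) - 1) := by
        rw [hsumV (fun v => y v ^ r)]
        have hold : ∑ v ∈ H'.vertexSet, y v ^ r = C := by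
          rw [hCdef]
          apply Finset.sum_congr rfl
          intro v hv
          rw [hyold v hv, rpow_npow_aux (x v) e₁ (hx v) r,
            show e₁ * (r : ℝ) = (r : ℝ) - 1 by rw [he₁def]; field_simp,
            ← hcast, Real.rpow_natCast]
        have hnew : ∑ e ∈ H'.edges, y (φ e) ^ r = C / ((r : ℝ) - 1) := by
          have heach : ∀ e ∈ H'.edges,
              y (φ e) ^ r = C / (((r : ℝ) - 1) * P) * (∏ v ∈ e, x v) := by
            intro e he
            rw [hyφ e he, mul_pow]
            have hb : (0:ℝ) ≤ ∏ v ∈ e, x v := Finset.prod_nonneg fun v _ => hx v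
            rw [rpow_npow_aux _ _ hb r,
              show (1 : ℝ) / (r : ℝ) * (r : ℝ) = 1 by field_simp, Real.rpow_one]
            congr 1
            rw [hs₀def, rpow_npow_aux _ _ (by positivity) r,
              show (1 : ℝ) / (r : ℝ) * (r : ℝ) = 1 by field_simp, Real.rpow_one]
          rw [Finset.sum_congr rfl heach, ← Finset.mul_sum, ← hPdef]
          field_simp
        rw [hold, hnew]
        field_simp
        ring
      refine ⟨y, hy0, ⟨v₀, ?_, ?_⟩, ?_⟩
      · rw [hvs]; exact Finset.mem_union_left _ hv₀
      · rw [hyold v₀ hv₀]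
        exact (Real.rpow_pos_of_pos (lt_of_le_of_ne (hx v₀) (Ne.symm hx₀)) _).ne'
      · rw [hnum, hden, hKdef, he₁def]
        exact value_identity (by linarith) hP hC
  -- direction B
  have dirB : ∀ t ∈ S, ∃ t' ∈ S', t ≤ K * t' ^ e₁ := by
    rintro t ⟨y, hy0, ⟨u₀, hu₀, hyu₀⟩, rfl⟩
    have hDenpos : 0 < ∑ v ∈ H.vertexSet, y v ^ r := denom_pos (G := H) r y hy0 hu₀ hyu₀
    by_cases holdall : ∀ v ∈ H'.vertexSet, y v = 0
    · obtain ⟨t', ht'⟩ := hS'ne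
      refine ⟨t', ht', ?_⟩
      have hnum0 : (∑ E ∈ H.edges, ∏ v ∈ E, y v) = 0 := by
        rw [hsumE (fun E => ∏ v ∈ E, y v)]
        apply Finset.sum_eq_zero
        intro e he
        have hene : e.Nonempty := Finset.card_pos.mp (by rw [huni e he]; omega)
        obtain ⟨u, hu⟩ := hene
        exact Finset.prod_eq_zero (Finset.mem_insert_of_mem hu) (holdall u (hsub e he hu))
      rw [hnum0, zero_div]
      exact mul_nonneg hKpos.le (Real.rpow_nonneg (hS'nonneg t' ht') _)
    · push_neg at holdall
      obtain ⟨w₀, hw₀, hyw₀⟩ := holdall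
      have hyw₀' : 0 < y w₀ := lt_of_le_of_ne (hy0 w₀) (Ne.symm hyw₀)
      set x : V → ℝ := fun v =>
        if v ∈ H'.vertexSet then y v ^ ((r : ℝ) / ((r : ℝ) - 1)) else 0 with hxdef
      have hx0 : ∀ v, 0 ≤ x v := by
        intro v; rw [hxdef]; dsimp only
        split_ifs
        · exact Real.rpow_nonneg (hy0 v) _
        · exact le_refl 0
      have hxold : ∀ v ∈ H'.vertexSet, x v = y v ^ ((r : ℝ) / ((r : ℝ) - 1)) := by
        intro v hv; rw [hxdef]; dsimp only; rw [if_pos hv]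
      set C : ℝ := ∑ v ∈ H'.vertexSet, y v ^ r with hCdef
      set P : ℝ := ∑ e ∈ H'.edges, ∏ v ∈ e, x v with hPdef
      have hCpos : 0 < C := Finset.sum_pos' (fun v _ => pow_nonneg (hy0 v) r)
        ⟨w₀, hw₀, pow_pos hyw₀' r⟩
      have hxsum : ∑ v ∈ H'.vertexSet, x v ^ (r - 1) = C := by
        rw [hCdef]
        apply Finset.sum_congr rfl
        intro v hv
        rw [hxold v hv, rpow_npow_aux _ _ (hy0 v) (r - 1), hcast,
          show (r : ℝ) / ((r : ℝ) - 1) * ((r : ℝ) - 1) = (r : ℝ) by field_simp,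
          Real.rpow_natCast]
      have ht' : P / C ∈ S' := by
        refine ⟨x, hx0, ⟨w₀, hw₀, ?_⟩, by rw [hxsum]⟩
        rw [hxold w₀ hw₀]
        exact (Real.rpow_pos_of_pos hyw₀' _).ne'
      refine ⟨P / C, ht', ?_⟩
      have hPsum : P = ∑ e ∈ H'.edges, (∏ v ∈ e, y v) ^ ((r : ℝ) / ((r : ℝ) - 1)) := by
        rw [hPdef]
        apply Finset.sum_congr rfl
        intro e he
        rw [Finset.prod_congr rfl (fun v hv => hxold v (hsub e he hv)),
          Real.finset_prod_rpow e y (fun v _ => hy0 v) _]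
      have hDenC : (∑ v ∈ H.vertexSet, y v ^ r) = C + ∑ e ∈ H'.edges, y (φ e) ^ r := by
        rw [hsumV (fun v => y v ^ r), hCdef]
      have hNume : (∑ E ∈ H.edges, ∏ v ∈ E, y v)
          = ∑ e ∈ H'.edges, y (φ e) * ∏ v ∈ e, y v := by
        rw [hsumE (fun E => ∏ v ∈ E, y v)]
        exact Finset.sum_congr rfl fun e he => hprodIns y e he
      have hZr0 : 0 ≤ ∑ e ∈ H'.edges, y (φ e) ^ r :=
        Finset.sum_nonneg fun e _ => pow_nonneg (hy0 _) r
      have hhold := holder_sum H'.edges (fun e => ∏ v ∈ e, y v) (fun e => y (φ e))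
        (fun e _ => Finset.prod_nonneg fun v _ => hy0 v) (fun e _ => hy0 _) r (by omega)
      rw [← hPsum] at hhold
      have hNle : (∑ E ∈ H.edges, ∏ v ∈ E, y v)
          ≤ P ^ e₁ * (∑ e ∈ H'.edges, y (φ e) ^ r) ^ ((1 : ℝ) / (r : ℝ)) := by
        rw [hNume, he₁def]
        exact hhold
      have hP0 : 0 ≤ P := Finset.sum_nonneg fun e _ => Finset.prod_nonneg fun v _ => hx0 v
      rcases eq_or_lt_of_le hP0 with hPz | hPpos
      · have hnum0 : (∑ E ∈ H.edges, ∏ v ∈ E, y v) ≤ 0 := by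
          calc (∑ E ∈ H.edges, ∏ v ∈ E, y v)
              ≤ P ^ e₁ * (∑ e ∈ H'.edges, y (φ e) ^ r) ^ ((1 : ℝ) / (r : ℝ)) := hNle
            _ = 0 := by rw [← hPz, Real.zero_rpow he₁pos.ne', zero_mul]
        have hle0 : (∑ E ∈ H.edges, ∏ v ∈ E, y v) / (∑ v ∈ H.vertexSet, y v ^ r) ≤ 0 :=
          div_nonpos_of_nonpos_of_nonneg hnum0 hDenpos.le
        have hrhs : K * (P / C) ^ e₁ = 0 := by
          rw [← hPz, zero_div, Real.zero_rpow he₁pos.ne', mul_zero]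
        rw [hrhs]
        exact hle0
      · rw [hDenC, hKdef, he₁def]
        exact value_upper (by linarith) hPpos hCpos hZr0 (by rw [← he₁def]; exact hNle)
  -- sup juggling
  set lam := sSup S' with hlamdef
  set M := sSup S with hMdef
  have hlam0 : 0 ≤ lam := by
    obtain ⟨t, ht⟩ := hS'ne
    exact le_trans (hS'nonneg t ht) (le_csSup hS'bdd ht)
  have hM0 : 0 ≤ M := le_csSup hSbdd hSzero
  have hle1 : M ≤ K * lam ^ e₁ := by
    apply Real.sSup_le
    · intro t ht
      obtain ⟨t', ht', hle⟩ := dirB t ht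
      calc t ≤ K * t' ^ e₁ := hle
        _ ≤ K * lam ^ e₁ := by
            apply mul_le_mul_of_nonneg_left _ hKpos.le
            exact Real.rpow_le_rpow (hS'nonneg t' ht') (le_csSup hS'bdd ht') he₁pos.le
    · exact mul_nonneg hKpos.le (Real.rpow_nonneg hlam0 _)
  have hle2 : K * lam ^ e₁ ≤ M := by
    have hstep : ∀ t' ∈ S', t' ≤ (M / K) ^ ((r : ℝ) / ((r : ℝ) - 1)) := by
      intro t' ht'
      have h1 : K * t' ^ e₁ ≤ M := le_csSup hSbdd (dirA t' ht')
      have h2 : t' ^ e₁ ≤ M / K := by rwa [le_div_iff₀ hKpos, mul_comm]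
      have h3 := Real.rpow_le_rpow (Real.rpow_nonneg (hS'nonneg t' ht') _) h2
        (le_of_lt (div_pos hR0 hR1))
      rwa [← Real.rpow_mul (hS'nonneg t' ht'),
        show e₁ * ((r : ℝ) / ((r : ℝ) - 1)) = 1 by rw [he₁def]; field_simp,
        Real.rpow_one] at h3
    have hlamle : lam ≤ (M / K) ^ ((r : ℝ) / ((r : ℝ) - 1)) :=
      Real.sSup_le hstep (Real.rpow_nonneg (div_nonneg hM0 hKpos.le) _)
    calc K * lam ^ e₁ ≤ K * ((M / K) ^ ((r : ℝ) / ((r : ℝ) - 1))) ^ e₁ := by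
          apply mul_le_mul_of_nonneg_left _ hKpos.le
          exact Real.rpow_le_rpow hlam0 hlamle he₁pos.le
      _ = K * (M / K) := by
          rw [← Real.rpow_mul (div_nonneg hM0 hKpos.le),
            show (r : ℝ) / ((r : ℝ) - 1) * e₁ = 1 by rw [he₁def]; field_simp,
            Real.rpow_one]
      _ = M := by field_simp
  refine ⟨lam, hlam0, rfl, ?_⟩
  have hunf : H.spectralRadius r = (Nat.factorial r : ℝ) * M := rfl
  rw [hunf, le_antisymm hle1 hle2]

end KeyLemma

/-- **Corollary (extension).**  For `r ≥ 3` and `α ∈ (0,1)`, if `H` is the `r`-uniform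
extension of the connected `(r−1)`-uniform hypergraph `H'`, then
`ρ(H) = (r−1)!·α^{−1/r}` iff `ρ(H') = (r−2)!·α^{−1/(r−1)}`, and likewise for `<`. -/
theorem spectralRadius_extension_iff {V : Type} [DecidableEq V] (r : ℕ) (hr : 3 ≤ r)
    (α : ℝ) (hα : α ∈ Set.Ioo (0 : ℝ) 1) (H' H : FinHypergraph V)
    (huni : H'.IsUniform (r - 1)) (hconn : H'.Connected) (hext : H.IsExtensionOf H') :
    (H.spectralRadius r = (Nat.factorial (r - 1) : ℝ) * α ^ (-(1 : ℝ) / (r : ℝ)) ↔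
      H'.spectralRadius (r - 1) =
        (Nat.factorial (r - 2) : ℝ) * α ^ (-(1 : ℝ) / ((r : ℝ) - 1))) ∧
    (H.spectralRadius r < (Nat.factorial (r - 1) : ℝ) * α ^ (-(1 : ℝ) / (r : ℝ)) ↔
      H'.spectralRadius (r - 1) <
        (Nat.factorial (r - 2) : ℝ) * α ^ (-(1 : ℝ) / ((r : ℝ) - 1))) := by
  have hR3 : (3 : ℝ) ≤ (r : ℝ) := by exact_mod_cast hr
  have hR0 : (0 : ℝ) < (r : ℝ) := by linarith
  have hR1 : (0 : ℝ) < (r : ℝ) - 1 := by linarith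
  have hα0 : (0 : ℝ) < α := hα.1
  have hApos : 0 < α ^ (-(1 : ℝ) / (r : ℝ)) := Real.rpow_pos_of_pos hα0 _
  have hBpos : 0 < α ^ (-(1 : ℝ) / ((r : ℝ) - 1)) := Real.rpow_pos_of_pos hα0 _
  have hf1pos : (0 : ℝ) < (Nat.factorial (r - 1) : ℝ) := by
    exact_mod_cast Nat.factorial_pos _
  have hf2pos : (0 : ℝ) < (Nat.factorial (r - 2) : ℝ) := by
    exact_mod_cast Nat.factorial_pos _
  rcases H'.edges.eq_empty_or_nonempty with hemp | hne
  · -- degenerate case : no edges at all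
    obtain ⟨φ, _, _, hE⟩ := hext
    have hv' : H'.vertexSet = ∅ := by simp [FinHypergraph.vertexSet, hemp]
    have hHemp : H.edges = ∅ := by simp [hE, hemp]
    have hv : H.vertexSet = ∅ := by simp [FinHypergraph.vertexSet, hHemp]
    have h1 : H'.spectralRadius (r - 1) = 0 := by
      rw [FinHypergraph.spectralRadius]
      have hset : {t : ℝ | ∃ x : V → ℝ, (∀ v, 0 ≤ x v) ∧ (∃ v ∈ H'.vertexSet, x v ≠ 0) ∧
          t = (∑ e ∈ H'.edges, ∏ v ∈ e, x v) / (∑ v ∈ H'.vertexSet, x v ^ (r - 1))} = ∅ := by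
        ext t; simp [hv']
      rw [hset, Real.sSup_empty, mul_zero]
    have h2 : H.spectralRadius r = 0 := by
      rw [FinHypergraph.spectralRadius]
      have hset : {t : ℝ | ∃ x : V → ℝ, (∀ v, 0 ≤ x v) ∧ (∃ v ∈ H.vertexSet, x v ≠ 0) ∧
          t = (∑ e ∈ H.edges, ∏ v ∈ e, x v) / (∑ v ∈ H.vertexSet, x v ^ r)} = ∅ := by
        ext t; simp [hv]
      rw [hset, Real.sSup_empty, mul_zero]
    rw [h1, h2]
    constructor
    · exact iff_of_false (mul_pos hf1pos hApos).ne (mul_pos hf2pos hBpos).ne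
    · exact iff_of_true (mul_pos hf1pos hApos) (mul_pos hf2pos hBpos)
  · obtain ⟨lam, hlam0, hρ', hρ⟩ := key_lemma r hr H' H huni hext hne
    have hfr : (Nat.factorial r : ℝ) = (r : ℝ) * (Nat.factorial (r - 1) : ℝ) := by
      have h2 : r - 1 + 1 = r := by omega
      calc (Nat.factorial r : ℝ) = (Nat.factorial (r - 1 + 1) : ℝ) := by rw [h2]
        _ = ((r - 1 + 1 : ℕ) : ℝ) * (Nat.factorial (r - 1) : ℝ) := by
            rw [Nat.factorial_succ]; push_cast; ring
        _ = (r : ℝ) * (Nat.factorial (r - 1) : ℝ) := by rw [h2]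
    have hfr1 : (Nat.factorial (r - 1) : ℝ) = ((r : ℝ) - 1) * (Nat.factorial (r - 2) : ℝ) := by
      rw [show r - 1 = (r - 2) + 1 from by omega, Nat.factorial_succ]
      push_cast [Nat.cast_sub (show 2 ≤ r by omega)]
      ring
    have hρH : H.spectralRadius r = (Nat.factorial (r - 1) : ℝ) *
        ((((r : ℝ) - 1) * lam) ^ (((r : ℝ) - 1) / (r : ℝ))) := by
      rw [hρ, hfr, Real.mul_rpow hR1.le hlam0]
      field_simp
    have hρH' : H'.spectralRadius (r - 1) =
        (Nat.factorial (r - 2) : ℝ) * (((r : ℝ) - 1) * lam) := by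
      rw [hρ', hfr1]; ring
    set u : ℝ := ((r : ℝ) - 1) * lam with hudef
    have hu0 : 0 ≤ u := mul_nonneg hR1.le hlam0
    have hAB : (α ^ (-(1 : ℝ) / ((r : ℝ) - 1))) ^ (((r : ℝ) - 1) / (r : ℝ))
        = α ^ (-(1 : ℝ) / (r : ℝ)) := by
      rw [← Real.rpow_mul hα0.le]
      congr 1
      field_simp
    constructor
    · rw [hρH, hρH', mul_right_inj' hf1pos.ne', mul_right_inj' hf2pos.ne', ← hAB,
        rpow_eq_rpow_iff_aux hu0 hBpos.le (div_pos hR1 hR0)]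
    · rw [hρH, hρH', mul_lt_mul_iff_right₀ hf1pos, mul_lt_mul_iff_right₀ hf2pos, ← hAB,
        rpow_lt_rpow_iff_aux hu0 hBpos.le (div_pos hR1 hR0)]
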